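/- arXiv:math/0301370 — 5 statements merged into one kernel-verified Lean document; each statement's English description precedes it below -/
import Mathlib

section
/- Let K be a field and let a₁, a₃, u₁ ∈ K with u₁ ≠ 0. Setting x = u₁a₃ + (a₁u₁+1)/u₁², one has the identity f_{a₁,a₃,3}(x) = A₃ · G₃², where f_{a₁,a₃,3}(x) = 4x³ + a₁²x² − 18a₁a₃x − a₃(4a₁³ + 27a₃), A₃ = 4u₁³a₃ + (u₁a₁+1)², and G₃ = (u₁³a₃ − u₁a₁ − 2)/u₁³. -/
/-- over any field `K`, for `a₁, a₃, u₁ ∈ K` with `u₁ ≠ 0` and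
`x = u₁a₃ + (a₁u₁+1)/u₁²`, one has `f_{a₁,a₃,3}(x) = A₃ · G₃²` with
`A₃ = 4u₁³a₃ + (u₁a₁+1)²` and `G₃ = (u₁³a₃ - u₁a₁ - 2)/u₁³`. -/
theorem stmt_4 {K : Type*} [Field K] (a₁ a₃ u₁ : K) (hu₁ : u₁ ≠ 0)
    (x : K) (hx : x = u₁ * a₃ + (a₁ * u₁ + 1) / u₁ ^ 2) :
    4 * x ^ 3 + a₁ ^ 2 * x ^ 2 - 18 * a₁ * a₃ * x - a₃ * (4 * a₁ ^ 3 + 27 * a₃) =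
      (4 * u₁ ^ 3 * a₃ + (u₁ * a₁ + 1) ^ 2) *
        ((u₁ ^ 3 * a₃ - u₁ * a₁ - 2) / u₁ ^ 3) ^ 2 := by
  subst hx
  field_simp
  ring
end

section
/- For all rational numbers a₁, u₁, z with u₁ ≠ 0, set a₃ = (z² − (u₁a₁+1)²)/(4u₁³) and x = (z² − (a₁u₁+1)(a₁u₁−3))/(4u₁²). Then the point (x, y) with y = z·(u₁³a₃ − u₁a₁ − 2)/u₁³ satisfies y² = f_{a₁,a₃,3}(x), i.e. it is a rational point of the quotient curve F_{a₁,a₃,3}. -/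
/-- for rationals `a₁, u₁, z` with `u₁ ≠ 0`, setting
`a₃ = (z² - (u₁a₁+1)²)/(4u₁³)` and `x = (z² - (a₁u₁+1)(a₁u₁-3))/(4u₁²)`, the
point `(x, y)` with `y = z(u₁³a₃ - u₁a₁ - 2)/u₁³` satisfies
`y² = f_{a₁,a₃,3}(x)`, i.e. it is a rational point of `F_{a₁,a₃,3}`. -/
theorem stmt_5 (a₁ u₁ z : ℚ) (hu₁ : u₁ ≠ 0)
    (a₃ : ℚ) (ha₃ : a₃ = (z ^ 2 - (u₁ * a₁ + 1) ^ 2) / (4 * u₁ ^ 3))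
    (x : ℚ) (hx : x = (z ^ 2 - (a₁ * u₁ + 1) * (a₁ * u₁ - 3)) / (4 * u₁ ^ 2))
    (y : ℚ) (hy : y = z * (u₁ ^ 3 * a₃ - u₁ * a₁ - 2) / u₁ ^ 3) :
    y ^ 2 = 4 * x ^ 3 + a₁ ^ 2 * x ^ 2 - 18 * a₁ * a₃ * x
        - a₃ * (4 * a₁ ^ 3 + 27 * a₃) := by
  subst ha₃ hx hy
  field_simp
  ring
end

section
/- Let v₀, z be rational numbers with z ≠ 3 + 9v₀² and z ≠ −(3 + 9v₀²). Set c = 2(9v₀⁴ + 18v₀² − v₀²z + z + 5)/((z + 3 + 9v₀²)(z − 3 − 9v₀²)) and w = v₀² − 1 + zc. Then A₆(v₀,c) = w², where A₆(v₀,c) = 9(3v₀²+1)²c² + 2(3v₀²+1)(3v₀²+5)c + (v₀²−1)²; consequently, with x = (19c² + 14c − 1 + v₀²(9c+1)²)/4 and y = w·v₀(9c+1)²/4, one has y² = f_{c,6}(x), i.e. (x,y) is a rational point of the quotient curve F_{c,6}. -/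
/-- for rationals `v₀, z` with `z ≠ ±(3 + 9v₀²)`, setting
`c = 2(9v₀⁴+18v₀²-v₀²z+z+5)/((z+3+9v₀²)(z-3-9v₀²))` and `w = v₀²-1+zc`, one has
`A₆(v₀,c) = w²`; consequently, with `x = (19c²+14c-1+v₀²(9c+1)²)/4` and
`y = w·v₀(9c+1)²/4`, one has `y² = f_{c,6}(x)`, i.e. `(x,y)` is a rational
point of the quotient curve `F_{c,6}`. -/
theorem stmt_7 (v₀ z : ℚ) (hz : z ≠ 3 + 9 * v₀ ^ 2) (hz' : z ≠ -(3 + 9 * v₀ ^ 2))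
    (c : ℚ)
    (hc : c = 2 * (9 * v₀ ^ 4 + 18 * v₀ ^ 2 - v₀ ^ 2 * z + z + 5) /
        ((z + 3 + 9 * v₀ ^ 2) * (z - 3 - 9 * v₀ ^ 2)))
    (w : ℚ) (hw : w = v₀ ^ 2 - 1 + z * c)
    (x : ℚ) (hx : x = (19 * c ^ 2 + 14 * c - 1 + v₀ ^ 2 * (9 * c + 1) ^ 2) / 4)
    (y : ℚ) (hy : y = w * v₀ * (9 * c + 1) ^ 2 / 4) :
    9 * (3 * v₀ ^ 2 + 1) ^ 2 * c ^ 2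
        + 2 * (3 * v₀ ^ 2 + 1) * (3 * v₀ ^ 2 + 5) * c + (v₀ ^ 2 - 1) ^ 2 = w ^ 2 ∧
    y ^ 2 = (4 * x - (19 * c ^ 2 + 14 * c - 1)) *
        (x ^ 2 + 2 * c * (2 * c + 1) * x + c * (4 * c ^ 3 + 4 * c ^ 2 + c + 4)) := by
  have hd1 : z + 3 + 9 * v₀ ^ 2 ≠ 0 := fun h => hz' (by linarith)
  have hd2 : z - 3 - 9 * v₀ ^ 2 ≠ 0 := fun h => hz (by linarith)
  have h1 : 9 * (3 * v₀ ^ 2 + 1) ^ 2 * c ^ 2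
      + 2 * (3 * v₀ ^ 2 + 1) * (3 * v₀ ^ 2 + 5) * c + (v₀ ^ 2 - 1) ^ 2 = w ^ 2 := by
    subst hc hw
    field_simp
    ring
  refine ⟨h1, ?_⟩
  subst hx hy
  linear_combination (-v₀ ^ 2 * (9 * c + 1) ^ 4 / 16) * h1
end

section
/- Let K be a field, let s, u ∈ K, and let x ∈ K with x ≠ 0. Then x⁵ · P_{−u,s,5}(s/x) = s⁴ · B_{s,u}(x), where P_{n,c,5}(X) = X⁵ − nX⁴ + (c³ + 2nc − c² − c)X³ − (c³ + nc² − 3c²)X² + (c⁴ − 3c³)X + c⁴ and B_{s,u}(X) = X⁵ + (s−3)X⁴ + (u−s+3)X³ + (s²−s−2u−1)X² + uX + s. In particular, the substitution (x,n,c) ↦ (s/x, −u, s) transforms the family P_{n,c,5} into Brumer's generic family B_{s,u}. -/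
/-- The quintic `P_{n,c,5}` attached to the Kubert curve `E_{c,5}`, evaluated
at `X`, with coefficients in a field `K`. -/
def P₅ {K : Type*} [Field K] (n c X : K) : K :=
  X ^ 5 - n * X ^ 4 + (c ^ 3 + 2 * n * c - c ^ 2 - c) * X ^ 3
    - (c ^ 3 + n * c ^ 2 - 3 * c ^ 2) * X ^ 2 + (c ^ 4 - 3 * c ^ 3) * X + c ^ 4

/-- Brumer's generic quintic family `B_{s,u}`, evaluated at `X`. -/
def B {K : Type*} [Field K] (s u X : K) : K :=
  X ^ 5 + (s - 3) * X ^ 4 + (u - s + 3) * X ^ 3 + (s ^ 2 - s - 2 * u - 1) * X ^ 2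
    + u * X + s

/-- for `s, u, x` in a field `K` with `x ≠ 0`,
`x⁵ · P_{-u,s,5}(s/x) = s⁴ · B_{s,u}(x)`; i.e. the substitution
`(x,n,c) ↦ (s/x, -u, s)` transforms the family `P_{n,c,5}` into Brumer's
generic family `B_{s,u}`. -/
theorem stmt_10 {K : Type*} [Field K] (s u x : K) (hx : x ≠ 0) :
    x ^ 5 * P₅ (-u) s (s / x) = s ^ 4 * B s u x := by
  simp only [P₅, B, div_eq_mul_inv]
  linear_combination (s ^ 5 + x * s ^ 4 * u + x * x⁻¹ * s ^ 5 + (-1) * x ^ 2 * s ^ 4 + (-2) * x ^ 2 * s ^ 4 * u + (-1) * x ^ 2 * s ^ 5 + x ^ 2 * s ^ 6 + x ^ 2 * x⁻¹ * s ^ 4 * u + x ^ 2 * x⁻¹ ^ 2 * s ^ 5 + (3) * x ^ 3 * s ^ 4 + x ^ 3 * s ^ 4 * u + (-1) * x ^ 3 * s ^ 5 + (-1) * x ^ 3 * x⁻¹ * s ^ 4 + (-2) * x ^ 3 * x⁻¹ * s ^ 4 * u + (-1) * x ^ 3 * x⁻¹ * s ^ 5 + x ^ 3 * x⁻¹ *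 s ^ 6 + x ^ 3 * x⁻¹ ^ 2 * s ^ 4 * u + x ^ 3 * x⁻¹ ^ 3 * s ^ 5 + (-3) * x ^ 4 * s ^ 4 + x ^ 4 * s ^ 5 + (3) * x ^ 4 * x⁻¹ * s ^ 4 + x ^ 4 * x⁻¹ * s ^ 4 * u + (-1) * x ^ 4 * x⁻¹ * s ^ 5 + (-1) * x ^ 4 * x⁻¹ ^ 2 * s ^ 4 + (-2) * x ^ 4 * x⁻¹ ^ 2 * s ^ 4 * u + (-1) * x ^ 4 * x⁻¹ ^ 2 * s ^ 5 + x ^ 4 * x⁻¹ ^ 2 * s ^ 6 + x ^ 4 * x⁻¹ ^ 3 * s ^ 4 * u + x ^ 4 * x⁻¹ ^ 4 * s ^ 5) * mul_inv_cancel₀ hx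
end

section
/- Let t be a nonzero rational number, set n = (t²+32)/(2t²) and c = (3t⁴−1024)/(16t⁴), and let P̃(x) = x⁴ − 2x³ + (1−n)x² + nx − c. If r (in some field extension of ℚ, e.g. ℂ) is a root of P̃, then X = (t/2)·r² − (t²+32)/(8t) is a root of the polynomial X⁴ − tX³ − 6X² + tX + 1 (the simplest quartic field polynomial of M.-N. Gras). -/
/-- for a nonzero rational `t`, with `n = (t²+32)/(2t²)` and
`c = (3t⁴-1024)/(16t⁴)`, if `r ∈ ℂ` is a root of
`P̃(x) = x⁴ - 2x³ + (1-n)x² + nx - c`, then `X = (t/2)r² - (t²+32)/(8t)` is a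
root of the simplest quartic polynomial `X⁴ - tX³ - 6X² + tX + 1` of
M.-N. Gras. -/
theorem stmt_12 (t : ℚ) (ht : t ≠ 0)
    (n : ℚ) (hn : n = (t ^ 2 + 32) / (2 * t ^ 2))
    (c : ℚ) (hc : c = (3 * t ^ 4 - 1024) / (16 * t ^ 4))
    (r : ℂ)
    (hr : r ^ 4 - 2 * r ^ 3 + (1 - (n : ℂ)) * r ^ 2 + (n : ℂ) * r - (c : ℂ) = 0)
    (X : ℂ) (hX : X = ((t : ℂ) / 2) * r ^ 2 - ((t : ℂ) ^ 2 + 32) / (8 * (t : ℂ))) :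
    X ^ 4 - (t : ℂ) * X ^ 3 - 6 * X ^ 2 + (t : ℂ) * X + 1 = 0 := by
  have hT : (t : ℂ) ≠ 0 := by exact_mod_cast ht
  set T : ℂ := (t : ℂ) with hTdef
  subst hn hc
  push_cast at hr
  field_simp at hr
  rw [← hTdef] at hr
  have hY : 8 * T * X = 4 * T ^ 2 * r ^ 2 - (T ^ 2 + 32) := by
    rw [hX]; field_simp; ring
  have key : 8192 * T ^ 6 * (X ^ 4 - T * X ^ 3 - 6 * X ^ 2 + T * X + 1) = 0 := by
    linear_combination (norm := ring)
      T ^ 2 * (16 * T ^ 4 * r ^ 4 + 32 * T ^ 4 * r ^ 3 + (8 * T ^ 4 - 256 * T ^ 2) * r ^ 2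
        - (8 * T ^ 4 + 256 * T ^ 2) * r + (1024 - 3 * T ^ 4)) * hr
      + ((-65536) * T ^ 2 + 2048 * T ^ 4 + 576 * T ^ 6 - 18 * T ^ 8
        + 24576 * T ^ 4 * r ^ 2 + 2560 * T ^ 6 * r ^ 2 + 152 * T ^ 8 * r ^ 2
        - 3072 * T ^ 6 * r ^ 4 - 352 * T ^ 8 * r ^ 4 + 128 * T ^ 8 * r ^ 6
        + (16384 * T ^ 3 - 1024 * T ^ 5 + 144 * T ^ 7
          - 4096 * T ^ 5 * r ^ 2 - 640 * T ^ 7 * r ^ 2 + 256 * T ^ 7 * r ^ 4) * X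
        + ((-4096) * T ^ 4 - 1152 * T ^ 6 + 512 * T ^ 6 * r ^ 2) * X ^ 2
        + 1024 * T ^ 5 * X ^ 3) * hY
  rcases mul_eq_zero.mp key with h | h
  · exact absurd h (by simp [hT])
  · exact h
end
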